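/- arXiv:1410.4742 — 5 statements merged into one kernel-verified Lean document; each statement's English description precedes it below -/
import Mathlib

section
/- Let S be a monoid and let A and B be S-acts. Then the coproduct (disjoint union) A ⊔ B is a cancellable S-act if and only if both A and B are cancellable S-acts. -/
universe u v w

/-- A right `S`-act structure on a type `A`: a map `A × S → A`, `(a, s) ↦ a · s`,
with `a · 1 = a` and `a · (s*t) = (a · s) · t`. (`S`-acts are additionally required
to be nonempty; this is imposed via `Nonempty` hypotheses.) -/
class RAct (S : Type u) [Monoid S] (A : Type v) : Type (max u v) where
  act : A → S → A
  act_one : ∀ a : A, act a 1 = a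
  act_mul : ∀ (a : A) (s t : S), act a (s * t) = act (act a s) t

/-- Isomorphism of `S`-acts: a bijective action-preserving map. -/
def ActIso (S : Type u) [Monoid S] (A : Type v) (B : Type w) [RAct S A] [RAct S B] : Prop :=
  ∃ e : A ≃ B, ∀ (a : A) (s : S), e (RAct.act a s) = RAct.act (e a) s

/-- The coproduct (disjoint union) of two `S`-acts, with componentwise action. -/
instance sumRAct (S : Type u) [Monoid S] (A : Type v) (B : Type w) [RAct S A] [RAct S B] :
    RAct S (A ⊕ B) where
  act x s := Sum.map (fun a => RAct.act a s) (fun b => RAct.act b s) x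
  act_one := by rintro (a | b) <;> simp [RAct.act_one]
  act_mul := by rintro (a | b) s t <;> simp [RAct.act_mul]

/-- An `S`-act `A` is cancellable if `A ⊔ B ≅ A ⊔ C` implies `B ≅ C`
for all `S`-acts `B`, `C`. -/
def Cancellable (S : Type u) [Monoid S] (A : Type u) [RAct S A] : Prop :=
  ∀ (B C : Type u) [RAct S B] [RAct S C] [Nonempty B] [Nonempty C],
    ActIso S (A ⊕ B) (A ⊕ C) → ActIso S B C

theorem actIso_refl (S : Type u) [Monoid S] (A : Type v) [RAct S A] : ActIso S A A :=
  ⟨Equiv.refl A, fun _ _ => rfl⟩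

theorem actIso_symm {S : Type u} [Monoid S] {A : Type v} {B : Type w} [RAct S A] [RAct S B]
    (h : ActIso S A B) : ActIso S B A := by
  obtain ⟨e, he⟩ := h
  refine ⟨e.symm, fun b s => ?_⟩
  apply e.injective
  simp [he]

theorem actIso_trans {S : Type u} [Monoid S] {A B C : Type*} [RAct S A] [RAct S B] [RAct S C]
    (h : ActIso S A B) (h' : ActIso S B C) : ActIso S A C := by
  obtain ⟨e, he⟩ := h
  obtain ⟨e', he'⟩ := h'
  exact ⟨e.trans e', fun a s => by simp [he, he']⟩

theorem actIso_sumCongr {S : Type u} [Monoid S] {A B C D : Type*}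
    [RAct S A] [RAct S B] [RAct S C] [RAct S D]
    (h : ActIso S A C) (h' : ActIso S B D) : ActIso S (A ⊕ B) (C ⊕ D) := by
  obtain ⟨e, he⟩ := h
  obtain ⟨e', he'⟩ := h'
  refine ⟨Equiv.sumCongr e e', ?_⟩
  rintro (a | b) s <;> simp [RAct.act, he, he']

theorem actIso_sumAssoc (S : Type u) [Monoid S] (A B C : Type*)
    [RAct S A] [RAct S B] [RAct S C] : ActIso S ((A ⊕ B) ⊕ C) (A ⊕ (B ⊕ C)) := by
  refine ⟨Equiv.sumAssoc A B C, ?_⟩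
  rintro ((a | b) | c) s <;> simp [RAct.act]

theorem actIso_sumComm (S : Type u) [Monoid S] (A B : Type*)
    [RAct S A] [RAct S B] : ActIso S (A ⊕ B) (B ⊕ A) := by
  refine ⟨Equiv.sumComm A B, ?_⟩
  rintro (a | b) s <;> simp [RAct.act]

/-- `A ⊔ B` is a cancellable `S`-act iff both `A` and `B` are. -/
theorem sum_cancellable_iff (S : Type u) [Monoid S] (A B : Type u)
    [RAct S A] [RAct S B] [Nonempty A] [Nonempty B] :
    Cancellable S (A ⊕ B) ↔ Cancellable S A ∧ Cancellable S B := by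
  constructor
  · intro hAB
    constructor
    · intro C D _ _ _ _ h
      apply hAB C D
      -- (A⊕B)⊕C ≅ (A⊕C)⊕B ≅ (A⊕D)⊕B ≅ (A⊕B)⊕D
      have step : ∀ (X : Type u) [RAct S X], ActIso S ((A ⊕ B) ⊕ X) ((A ⊕ X) ⊕ B) := by
        intro X _
        exact actIso_trans (actIso_sumAssoc S A B X)
          (actIso_trans (actIso_sumCongr (actIso_refl S A) (actIso_sumComm S B X))
            (actIso_symm (actIso_sumAssoc S A X B)))
      exact actIso_trans (step C)
        (actIso_trans (actIso_sumCongr h (actIso_refl S B)) (actIso_symm (step D)))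
    · intro C D _ _ _ _ h
      apply hAB C D
      exact actIso_trans (actIso_sumAssoc S A B C)
        (actIso_trans (actIso_sumCongr (actIso_refl S A) h)
          (actIso_symm (actIso_sumAssoc S A B D)))
  · rintro ⟨hA, hB⟩ C D _ _ _ _ h
    have h1 : ActIso S (A ⊕ (B ⊕ C)) (A ⊕ (B ⊕ D)) :=
      actIso_trans (actIso_symm (actIso_sumAssoc S A B C))
        (actIso_trans h (actIso_sumAssoc S A B D))
    exact hB C D (hA (B ⊕ C) (B ⊕ D) h1)
end

section
/- Let S be a monoid. Every indecomposable S-act is cancellable: if A is an indecomposable S-act and B, C are S-acts with A ⊔ B ≅ A ⊔ C, then B ≅ C. -/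
universe u v w

/-- A subact of an `S`-act: a nonempty subset closed under the action. -/
def IsSubact (S : Type u) [Monoid S] {A : Type v} [RAct S A] (T : Set A) : Prop :=
  T.Nonempty ∧ ∀ a ∈ T, ∀ s : S, RAct.act a s ∈ T

/-- An `S`-act is decomposable if it is the disjoint union of two subacts;
otherwise it is indecomposable. -/
def Decomposable (S : Type u) [Monoid S] (A : Type v) [RAct S A] : Prop :=
  ∃ T U : Set A, IsSubact S T ∧ IsSubact S U ∧ T ∪ U = Set.univ ∧ T ∩ U = ∅

/-!
An isomorphism `e : A ⊔ B ≅ A ⊔ C` with `A` indecomposable sends `A` entirely into `A` or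
entirely into `C`, and the same holds for `e⁻¹`; since `A` is nonempty, `e` keeps `A` inside
`A` only if `e⁻¹` does, and then `e` maps `B` into `C`. Hence, starting from `b ∈ B` and applying `e`
once more whenever we land in `A`, we reach `C` after at most two steps. This "return map"
`B → C` is a morphism, and the return map of `e⁻¹` is its inverse.
-/

namespace RAct

variable {S : Type*} [Monoid S] {X Y : Type*} [RAct S X] [RAct S Y]

@[simp]
lemma isLeft_act (z : X ⊕ Y) (s : S) : (act z s).isLeft = z.isLeft := by
  cases z <;> rfl

@[simp]
lemma isRight_act (z : X ⊕ Y) (s : S) : (act z s).isRight = z.isRight := by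
  cases z <;> rfl

end RAct

def IsActHom (S : Type*) [Monoid S] {X Y : Type*} [RAct S X] [RAct S Y] (f : X → Y) : Prop :=
  ∀ (x : X) (s : S), f (RAct.act x s) = RAct.act (f x) s

namespace IsActHom

variable {S : Type*} [Monoid S] {A B C X Y Z : Type*}
  [RAct S A] [RAct S B] [RAct S C] [RAct S X] [RAct S Y] [RAct S Z]

lemma inl : IsActHom S (Sum.inl : X → X ⊕ Y) := fun _ _ => rfl

lemma inr : IsActHom S (Sum.inr : Y → X ⊕ Y) := fun _ _ => rfl

lemma comp {g : Y → Z} {f : X → Y} (hg : IsActHom S g) (hf : IsActHom S f) :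
    IsActHom S (g ∘ f) := fun x s => by
  simp only [Function.comp_apply, hf x s, hg (f x) s]

lemma sumElim {f : X → Z} {g : Y → Z} (hf : IsActHom S f) (hg : IsActHom S g) :
    IsActHom S (Sum.elim f g) := by
  rintro (x | y) s
  · exact hf x s
  · exact hg y s

lemma equiv_symm {e : X ≃ Y} (he : IsActHom S e) : IsActHom S e.symm := fun y s =>
  e.injective (by rw [he, e.apply_symm_apply, e.apply_symm_apply])

lemma forall_isLeft_or_forall_isRight (hA : ¬ Decomposable S A) {f : A → X ⊕ Y}
    (hf : IsActHom S f) : (∀ a, (f a).isLeft) ∨ (∀ a, (f a).isRight) := by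
  by_contra! h
  obtain ⟨⟨a₁, h₁⟩, ⟨a₂, h₂⟩⟩ := h
  refine hA ⟨{a | (f a).isLeft}, {a | (f a).isRight},
    ⟨⟨a₂, ?_⟩, fun a ha s => ?_⟩, ⟨⟨a₁, ?_⟩, fun a ha s => ?_⟩, ?_, ?_⟩
  · simpa using h₂
  · simpa [hf a s] using ha
  · simpa using h₁
  · simpa [hf a s] using ha
  · exact Set.eq_univ_of_forall fun a => (em _).imp id Sum.not_isLeft.mp
  · exact Set.eq_empty_of_forall_notMem fun a => not_isLeft_and_isRight

end IsActHom

section ReturnMap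

variable {S : Type*} [Monoid S] {A B C : Type*} [RAct S A] [RAct S B] [RAct S C]

def returnMap (e : A ⊕ B ≃ A ⊕ C) : B → A ⊕ C :=
  Sum.elim (e ∘ Sum.inl) Sum.inr ∘ e ∘ Sum.inr

lemma IsActHom.returnMap {e : A ⊕ B ≃ A ⊕ C} (he : IsActHom S e) :
    IsActHom S (returnMap e) :=
  ((he.comp .inl).sumElim .inr).comp (he.comp .inr)

lemma returnMap_symm_of_returnMap_eq_inr {e : A ⊕ B ≃ A ⊕ C} {b : B} {c : C}
    (h : returnMap e b = Sum.inr c) : returnMap e.symm c = Sum.inr b := by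
  rcases hb : e (Sum.inr b) with a | c'
  · simp only [returnMap, Function.comp_apply, hb, Sum.elim_inl] at h
    simp [returnMap, ← h, ← hb]
  · simp only [returnMap, Function.comp_apply, hb, Sum.elim_inr] at h
    simp [returnMap, ← h, ← hb]

lemma isLeft_symm_inl_of_forall_isLeft [Nonempty A] (hA : ¬ Decomposable S A)
    {e : A ⊕ B ≃ A ⊕ C} (he : IsActHom S e) (hl : ∀ a, (e (Sum.inl a)).isLeft) (a : A) :
    (e.symm (Sum.inl a)).isLeft := by
  rcases (he.equiv_symm.comp .inl).forall_isLeft_or_forall_isRight hA with hl' | hr'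
  · exact hl' a
  · obtain ⟨a₀⟩ := ‹Nonempty A›
    obtain ⟨a₁, ha₁⟩ := Sum.isLeft_iff.mp (hl a₀)
    simpa [← ha₁] using hr' a₁

lemma isRight_returnMap [Nonempty A] (hA : ¬ Decomposable S A) {e : A ⊕ B ≃ A ⊕ C}
    (he : IsActHom S e) (b : B) : (returnMap e b).isRight := by
  rcases (he.comp .inl).forall_isLeft_or_forall_isRight hA with hl | hr
  · rcases hb : e (Sum.inr b) with a | c
    · simpa [← hb] using isLeft_symm_inl_of_forall_isLeft hA he hl a
    · simp [returnMap, hb]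
  · rcases hb : e (Sum.inr b) with a | c
    · simpa [returnMap, hb] using hr a
    · simp [returnMap, hb]

lemma actIso_of_forall_isRight_returnMap {e : A ⊕ B ≃ A ⊕ C} (he : IsActHom S e)
    (hB : ∀ b, (returnMap e b).isRight) (hC : ∀ c, (returnMap e.symm c).isRight) :
    ActIso S B C := by
  choose f hf using fun b => Sum.isRight_iff.mp (hB b)
  choose g hg using fun c => Sum.isRight_iff.mp (hC c)
  refine ⟨⟨f, g, fun b => ?_, fun c => ?_⟩, fun b s => ?_⟩
  · have := returnMap_symm_of_returnMap_eq_inr (hf b)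
    rw [hg] at this
    exact Sum.inr_injective this
  · have := returnMap_symm_of_returnMap_eq_inr (hg c)
    rw [e.symm_symm, hf] at this
    exact Sum.inr_injective this
  · apply Sum.inr_injective
    change Sum.inr (f (RAct.act b s)) = RAct.act (Sum.inr (f b) : A ⊕ C) s
    rw [← hf, ← hf, he.returnMap]

end ReturnMap

theorem indecomposable_cancellable_general (S : Type u) [Monoid S] (A : Type u)
    [RAct S A] [Nonempty A] (hA : ¬ Decomposable S A)
    (B C : Type u) [RAct S B] [RAct S C]
    (h : ActIso S (A ⊕ B) (A ⊕ C)) : ActIso S B C := by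
  obtain ⟨e, he⟩ := h
  exact actIso_of_forall_isRight_returnMap he (isRight_returnMap hA he)
    (isRight_returnMap hA (IsActHom.equiv_symm he))

/-- Every indecomposable `S`-act is cancellable. -/
theorem indecomposable_cancellable (S : Type u) [Monoid S] (A : Type u)
    [RAct S A] [Nonempty A] (hA : ¬ Decomposable S A)
    (B C : Type u) [RAct S B] [RAct S C] [Nonempty B] [Nonempty C]
    (h : ActIso S (A ⊕ B) (A ⊕ C)) : ActIso S B C :=
  indecomposable_cancellable_general S A hA B C h
end

section
/- Let S be a monoid. Every cyclic S-act is cancellable: if A is an S-act generated by a single element (A = aS for some a ∈ A) and B, C are S-acts with A ⊔ B ≅ A ⊔ C, then B ≅ C. -/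
/-!
Let `e : A ⊔ B ≅ A ⊔ C` with `A = aS`. Since `e (x s) = e (x) s`, the summand containing `e (a)`
contains all of `e (A)`, and likewise for `e⁻¹`. The mixed case is impossible: if `e (a) ∈ A`
but `e⁻¹ (A) ⊆ B`, then `e (a) = a t` and `a = e⁻¹ (a t) = e⁻¹ (a) t ∈ B`. Hence either `e` and
`e⁻¹` both map `A` into `A`, or `e` maps `A` into `C` and `e⁻¹` maps `A` into `B`. In both cases,
following `e` from `b ∈ B` passes through `A` at most once before landing in `C`, and sending `b`
to that landing point is an isomorphism `B ≅ C`, whose inverse is the same construction for `e⁻¹`.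
-/

universe u v w

open Sum

/-- `c` is where the `e`-orbit of `inr b` first enters `γ`, provided it does so within two
steps. -/
def Equiv.SumMatch {α β γ : Type*} (e : α ⊕ β ≃ α ⊕ γ) (b : β) (c : γ) : Prop :=
  e (inr b) = inr c ∨ ∃ x, e (inr b) = inl x ∧ e (inl x) = inr c

namespace Equiv.SumMatch

variable {α β γ : Type*} {e : α ⊕ β ≃ α ⊕ γ} {b b' : β} {c c' : γ}

theorem symm_iff : e.symm.SumMatch c b ↔ e.SumMatch b c := by
  simp only [Equiv.SumMatch, Equiv.symm_apply_eq, eq_comm (b := e _), and_comm]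

theorem right_unique (h : e.SumMatch b c) (h' : e.SumMatch b c') : c = c' := by
  rcases h with h | ⟨x, hb, hx⟩ <;> rcases h' with h' | ⟨x', hb', hx'⟩
  · exact inr_injective (h.symm.trans h')
  · exact absurd (h.symm.trans hb') (by simp)
  · exact absurd (h'.symm.trans hb) (by simp)
  · obtain rfl : x = x' := inl_injective (hb.symm.trans hb')
    exact inr_injective (hx.symm.trans hx')

theorem left_unique (h : e.SumMatch b c) (h' : e.SumMatch b' c) : b = b' :=
  right_unique (symm_iff.mpr h) (symm_iff.mpr h')

theorem exists_right (he : ∀ x, (e.symm (inl x)).isRight → (e (inl x)).isRight) (b : β) :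
    ∃ c, e.SumMatch b c := by
  rcases hb : e (inr b) with x | c
  · have hx : (e.symm (inl x)).isRight := by simp [← hb]
    obtain ⟨c, hc⟩ := isRight_iff.mp (he x hx)
    exact ⟨c, .inr ⟨x, hb, hc⟩⟩
  · exact ⟨c, .inl hb⟩

end Equiv.SumMatch

namespace RAct

variable {S : Type*} [Monoid S] {A B C X Y : Type*} [RAct S A] [RAct S B] [RAct S C]
  [RAct S X] [RAct S Y]

@[simp]
theorem act_inl (x : A) (s : S) : act (inl x : A ⊕ B) s = inl (act x s) := rfl

@[simp]
theorem act_inr (b : B) (s : S) : act (inr b : A ⊕ B) s = inr (act b s) := rfl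

@[simp]
theorem isRight_act_s2 (y : A ⊕ B) (s : S) : (act y s).isRight = y.isRight := by
  cases y <;> rfl

theorem symm_act {e : X ≃ Y} (he : ∀ x (s : S), e (act x s) = act (e x) s) (y : Y) (s : S) :
    e.symm (act y s) = act (e.symm y) s := by
  rw [Equiv.symm_apply_eq, he, Equiv.apply_symm_apply]

theorem isRight_apply_inl_eq_of_generator {f : A ⊕ B → A ⊕ C}
    (hf : ∀ y (s : S), f (act y s) = act (f y) s) {a : A} (ha : ∀ x : A, ∃ s : S, x = act a s)
    (x : A) : (f (inl x)).isRight = (f (inl a)).isRight := by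
  obtain ⟨s, rfl⟩ := ha x
  rw [← act_inl (B := B), hf, isRight_act_s2]

theorem isRight_apply_inl_of_isRight_symm_apply_inl {e : A ⊕ B ≃ A ⊕ C}
    (he : ∀ y (s : S), e (act y s) = act (e y) s) {a : A} (ha : ∀ x : A, ∃ s : S, x = act a s)
    (x : A) (hx : (e.symm (inl x)).isRight) : (e (inl x)).isRight := by
  have he' := symm_act he
  rw [isRight_apply_inl_eq_of_generator he ha]
  rw [isRight_apply_inl_eq_of_generator he' ha] at hx
  rcases ha' : e (inl a) with a' | c
  · have h_symm := isRight_apply_inl_eq_of_generator he' ha a'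
    rw [← ha', Equiv.symm_apply_apply, hx] at h_symm
    simp at h_symm
  · rfl

theorem sumMatch_act {e : A ⊕ B ≃ A ⊕ C} (he : ∀ y (s : S), e (act y s) = act (e y) s)
    {b : B} {c : C} (h : e.SumMatch b c) (s : S) : e.SumMatch (act b s) (act c s) := by
  rcases h with hb | ⟨x, hb, hx⟩
  · left
    rw [← act_inr (A := A), he, hb, act_inr]
  · right
    refine ⟨act x s, ?_, ?_⟩
    · rw [← act_inr (A := A), he, hb, act_inl]
    · rw [← act_inl (B := B), he, hx, act_inr]

end RAct

open RAct in
theorem cyclic_cancellable_general (S : Type u) [Monoid S] (A : Type u) [RAct S A]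
    (hA : ∃ a : A, ∀ x : A, ∃ s : S, x = RAct.act a s)
    (B C : Type u) [RAct S B] [RAct S C]
    (h : ActIso S (A ⊕ B) (A ⊕ C)) : ActIso S B C := by
  obtain ⟨a, ha⟩ := hA
  obtain ⟨e, he⟩ := h
  have he' := symm_act he
  have hB := Equiv.SumMatch.exists_right (isRight_apply_inl_of_isRight_symm_apply_inl he ha)
  have hC := Equiv.SumMatch.exists_right (isRight_apply_inl_of_isRight_symm_apply_inl he' ha)
  choose f hf using hB
  choose g hg using hC
  have hg' : ∀ c, e.SumMatch (g c) c := fun c => Equiv.SumMatch.symm_iff.mp (hg c)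
  refine ⟨⟨f, g, fun b => (hf b).left_unique (hg' (f b)) |>.symm,
    fun c => (hg' c).right_unique (hf (g c)) |>.symm⟩, fun b s => ?_⟩
  exact (hf (act b s)).right_unique (sumMatch_act he (hf b) s)

/-- Every cyclic `S`-act is cancellable. -/
theorem cyclic_cancellable (S : Type u) [Monoid S] (A : Type u) [RAct S A]
    (hA : ∃ a : A, ∀ x : A, ∃ s : S, x = RAct.act a s)
    (B C : Type u) [RAct S B] [RAct S C] [Nonempty B] [Nonempty C]
    (h : ActIso S (A ⊕ B) (A ⊕ C)) : ActIso S B C :=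
  cyclic_cancellable_general S A hA B C h
end

section
/- Let S be a monoid. Every finitely decomposable S-act is cancellable: if A is an S-act that is the disjoint union of finitely many indecomposable subacts, and B, C are S-acts with A ⊔ B ≅ A ⊔ C, then B ≅ C. -/
universe u v w

/-- A subact `T` is indecomposable if it is not the disjoint union of two subacts. -/
def IndecompSubact (S : Type u) [Monoid S] {A : Type v} [RAct S A] (T : Set A) : Prop :=
  IsSubact S T ∧
    ¬ ∃ U V : Set A, IsSubact S U ∧ IsSubact S V ∧ U ∪ V = T ∧ U ∩ V = ∅

/-- An `S`-act is finitely decomposable if it is the disjoint union of finitely many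
indecomposable subacts. -/
def FinitelyDecomposable (S : Type u) [Monoid S] (A : Type v) [RAct S A] : Prop :=
  ∃ (n : ℕ) (T : Fin n → Set A), (∀ i, IndecompSubact S (T i)) ∧
    (∀ i j, i ≠ j → T i ∩ T j = ∅) ∧ (⋃ i, T i) = Set.univ

section Aux

variable {S : Type u} [Monoid S]

/-- One-step relation on an act: `a` goes to `a·s`. -/
def ActStep (S : Type u) [Monoid S] {A : Type v} [RAct S A] (a b : A) : Prop :=
  ∃ s : S, RAct.act a s = b

/-- Connectivity: equivalence generated by the one-step relation. -/
def Conn (S : Type u) [Monoid S] {A : Type v} [RAct S A] : A → A → Prop :=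
  Relation.EqvGen (ActStep S)

lemma Conn.rfl {A : Type v} [RAct S A] (a : A) : Conn S a a := Relation.EqvGen.refl a

lemma Conn.symm {A : Type v} [RAct S A] {a b : A} (h : Conn S a b) : Conn S b a :=
  Relation.EqvGen.symm _ _ h

lemma Conn.trans {A : Type v} [RAct S A] {a b c : A} (h1 : Conn S a b) (h2 : Conn S b c) :
    Conn S a c := Relation.EqvGen.trans _ _ _ h1 h2

lemma conn_act {A : Type v} [RAct S A] (a : A) (s : S) : Conn S a (RAct.act a s) :=
  Relation.EqvGen.rel _ _ ⟨s, Eq.refl _⟩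

lemma conn_map {A : Type v} {B : Type w} [RAct S A] [RAct S B] (f : A → B)
    (hf : ∀ (a : A) (s : S), f (RAct.act a s) = RAct.act (f a) s) {a b : A}
    (h : Conn S a b) : Conn S (f a) (f b) := by
  induction h with
  | rel x y h => obtain ⟨s, rfl⟩ := h; exact Relation.EqvGen.rel _ _ ⟨s, (hf x s).symm⟩
  | refl x => exact Relation.EqvGen.refl _
  | symm x y h ih => exact Relation.EqvGen.symm _ _ ih
  | trans x y z h1 h2 ih1 ih2 => exact Relation.EqvGen.trans _ _ _ ih1 ih2

lemma equivariant_symm {A : Type v} {B : Type w} [RAct S A] [RAct S B] (e : A ≃ B)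
    (he : ∀ (a : A) (s : S), e (RAct.act a s) = RAct.act (e a) s) :
    ∀ (b : B) (s : S), e.symm (RAct.act b s) = RAct.act (e.symm b) s := by
  intro b s
  apply e.injective
  rw [Equiv.apply_symm_apply, he, Equiv.apply_symm_apply]

lemma ActIso.symm' {A : Type v} {B : Type w} [RAct S A] [RAct S B]
    (h : ActIso S A B) : ActIso S B A := by
  obtain ⟨e, he⟩ := h
  exact ⟨e.symm, equivariant_symm e he⟩

lemma ActIso.trans' {A : Type u_1} {B : Type u_2} {C : Type u_3}
    [RAct S A] [RAct S B] [RAct S C]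
    (h1 : ActIso S A B) (h2 : ActIso S B C) : ActIso S A C := by
  obtain ⟨e, he⟩ := h1
  obtain ⟨f, hf⟩ := h2
  exact ⟨e.trans f, by intro a s; simp [Equiv.trans_apply, he, hf]⟩

lemma act_inl {A : Type v} {B : Type w} [RAct S A] [RAct S B] (a : A) (s : S) :
    RAct.act (Sum.inl a : A ⊕ B) s = Sum.inl (RAct.act a s) := rfl

lemma act_inr {A : Type v} {B : Type w} [RAct S A] [RAct S B] (b : B) (s : S) :
    RAct.act (Sum.inr b : A ⊕ B) s = Sum.inr (RAct.act b s) := rfl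

/-- Components of elements of a sum act match. -/
def SumConnP (S : Type u) [Monoid S] {A : Type v} {B : Type w} [RAct S A] [RAct S B] :
    A ⊕ B → A ⊕ B → Prop
  | Sum.inl a, Sum.inl b => Conn S a b
  | Sum.inr a, Sum.inr b => Conn S a b
  | _, _ => False

lemma conn_sum {A : Type v} {B : Type w} [RAct S A] [RAct S B] {u v : A ⊕ B}
    (h : Conn S u v) : SumConnP S u v := by
  induction h with
  | rel x y h =>
    obtain ⟨s, rfl⟩ := h
    cases x with
    | inl a => exact conn_act a s
    | inr b => exact conn_act b s
  | refl x => cases x <;> exact Conn.rfl _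
  | symm x y _ ih =>
    cases x <;> cases y <;> first | exact ih.elim | exact Conn.symm ih
  | trans x y z _ _ ih1 ih2 =>
    cases x <;> cases y <;> cases z <;>
      first | exact ih1.elim | exact ih2.elim | exact Conn.trans ih1 ih2

lemma conn_inl_inr_false {A : Type v} {B : Type w} [RAct S A] [RAct S B] {a : A} {b : B}
    (h : Conn S (Sum.inl a : A ⊕ B) (Sum.inr b)) : False := conn_sum h

/-- Any indecomposable (all elements connected) act is cancellable. -/
lemma indecomp_cancellable (X : Type u) [RAct S X] [Nonempty X]
    (hX : ∀ a b : X, Conn S a b) : Cancellable S X := by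
  intro B C _ _ _ _ h
  obtain ⟨e, he⟩ := h
  have hes := equivariant_symm e he
  have key1 : ∀ (y : X) (b : B), e.symm (Sum.inl y) = Sum.inr b →
      ∃ c, e (Sum.inl y) = Sum.inr c := by
    intro y b hb
    cases hh : e (Sum.inl y) with
    | inr c => exact ⟨c, rfl⟩
    | inl y' =>
      exfalso
      have h1 : Conn S (Sum.inl y' : X ⊕ C) (Sum.inl y) :=
        conn_map Sum.inl (fun _ _ => rfl) (hX y' y)
      have h2 := conn_map e.symm hes h1
      rw [show e.symm (Sum.inl y') = Sum.inl y by rw [← hh, Equiv.symm_apply_apply], hb] at h2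
      exact conn_inl_inr_false h2
  have key2 : ∀ (y : X) (c : C), e (Sum.inl y) = Sum.inr c →
      ∃ b, e.symm (Sum.inl y) = Sum.inr b := by
    intro y c hc
    cases hh : e.symm (Sum.inl y) with
    | inr b => exact ⟨b, rfl⟩
    | inl y' =>
      exfalso
      have h1 : Conn S (Sum.inl y' : X ⊕ B) (Sum.inl y) :=
        conn_map Sum.inl (fun _ _ => rfl) (hX y' y)
      have h2 := conn_map e he h1
      rw [show e (Sum.inl y') = Sum.inl y by rw [← hh, Equiv.apply_symm_apply], hc] at h2
      exact conn_inl_inr_false h2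
  set R : B → C → Prop := fun b c =>
    (∃ y : X, e (Sum.inr b) = Sum.inl y ∧ e (Sum.inl y) = Sum.inr c) ∨
      e (Sum.inr b) = Sum.inr c with hR
  have ex : ∀ b, ∃ c, R b c := by
    intro b
    cases hh : e (Sum.inr b) with
    | inr c => exact ⟨c, Or.inr hh⟩
    | inl y =>
      have hb : e.symm (Sum.inl y) = Sum.inr b := by rw [← hh, Equiv.symm_apply_apply]
      obtain ⟨c, hc⟩ := key1 y b hb
      exact ⟨c, Or.inl ⟨y, hh, hc⟩⟩
  have ex' : ∀ c, ∃ b, R b c := by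
    intro c
    cases hh : e.symm (Sum.inr c) with
    | inr b => exact ⟨b, Or.inr (by rw [← hh, Equiv.apply_symm_apply])⟩
    | inl y =>
      have hc : e (Sum.inl y) = Sum.inr c := by rw [← hh, Equiv.apply_symm_apply]
      obtain ⟨b, hb⟩ := key2 y c hc
      exact ⟨b, Or.inl ⟨y, by rw [← hb, Equiv.apply_symm_apply], hc⟩⟩
  have Rsymm : ∀ b c, R b c →
      (∃ y : X, e.symm (Sum.inr c) = Sum.inl y ∧ e.symm (Sum.inl y) = Sum.inr b) ∨
        e.symm (Sum.inr c) = Sum.inr b := by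
    rintro b c (⟨y, h1, h2⟩ | hh)
    · exact Or.inl ⟨y, by rw [← h2, Equiv.symm_apply_apply],
        by rw [← h1, Equiv.symm_apply_apply]⟩
    · exact Or.inr (by rw [← hh, Equiv.symm_apply_apply])
  have uniqC : ∀ b c c', R b c → R b c' → c = c' := by
    rintro b c c' (⟨y, h1, h2⟩ | hh) (⟨y', h1', h2'⟩ | hh')
    · have hy : y = y' := Sum.inl.inj (h1.symm.trans h1')
      subst hy
      exact Sum.inr.inj (h2.symm.trans h2')
    · exact absurd (h1.symm.trans hh') (by simp)
    · exact absurd (hh.symm.trans h1') (by simp)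
    · exact Sum.inr.inj (hh.symm.trans hh')
  have uniqB : ∀ b b' c, R b c → R b' c → b = b' := by
    intro b b' c h1 h2
    have h1' := Rsymm b c h1
    have h2' := Rsymm b' c h2
    rcases h1' with ⟨y, g1, g2⟩ | gg <;> rcases h2' with ⟨y', g1', g2'⟩ | gg'
    · have hy : y = y' := Sum.inl.inj (g1.symm.trans g1')
      subst hy
      exact Sum.inr.inj (g2.symm.trans g2')
    · exact absurd (g1.symm.trans gg') (by simp)
    · exact absurd (gg.symm.trans g1') (by simp)
    · exact Sum.inr.inj (gg.symm.trans gg')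
  have Ract : ∀ b c (s : S), R b c → R (RAct.act b s) (RAct.act c s) := by
    rintro b c s (⟨y, h1, h2⟩ | hh)
    · refine Or.inl ⟨RAct.act y s, ?_, ?_⟩
      · rw [show (Sum.inr (RAct.act b s) : X ⊕ B) = RAct.act (Sum.inr b) s from rfl, he, h1]
        rfl
      · rw [show (Sum.inl (RAct.act y s) : X ⊕ B) = RAct.act (Sum.inl y) s from rfl, he, h2]
        rfl
    · refine Or.inr ?_
      rw [show (Sum.inr (RAct.act b s) : X ⊕ B) = RAct.act (Sum.inr b) s from rfl, he, hh]
      rfl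
  choose F hF using ex
  choose G hG using ex'
  refine ⟨⟨F, G, fun b => uniqB _ _ _ (hG (F b)) (hF b),
    fun c => uniqC _ _ _ (hF (G c)) (hG c)⟩, ?_⟩
  intro b s
  exact uniqC _ _ _ (hF (RAct.act b s)) (Ract b (F b) s (hF b))

/-- Act structure on a subact. -/
def subAct {A : Type v} [RAct S A] (T : Set A)
    (hT : ∀ a ∈ T, ∀ s : S, RAct.act a s ∈ T) : RAct S ↥T where
  act a s := ⟨RAct.act a.1 s, hT _ a.2 s⟩
  act_one a := Subtype.ext (RAct.act_one _)
  act_mul a s t := Subtype.ext (RAct.act_mul _ _ _)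

lemma subact_image {A : Type v} [RAct S A] (T : Set A)
    (hcl : ∀ a ∈ T, ∀ s : S, RAct.act a s ∈ T) (U' : Set ↥T)
    (h : @IsSubact S _ ↥T (subAct T hcl) U') : IsSubact S (Subtype.val '' U') := by
  constructor
  · exact h.1.image _
  · rintro _ ⟨x, hx, rfl⟩ s
    exact ⟨@RAct.act S _ ↥T (subAct T hcl) x s, h.2 x hx s, rfl⟩

/-- If `T` is an indecomposable subact, the whole of `↥T` is an indecomposable subact
of itself. -/
lemma indecomp_univ_of_indecomp {A : Type v} [RAct S A] (T : Set A)
    (hT : IndecompSubact S T) :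
    @IndecompSubact S _ ↥T (subAct T hT.1.2) (Set.univ : Set ↥T) := by
  letI := subAct (S := S) T hT.1.2
  constructor
  · refine ⟨?_, fun a _ s => Set.mem_univ _⟩
    obtain ⟨a, ha⟩ := hT.1.1
    exact ⟨⟨a, ha⟩, Set.mem_univ _⟩
  · rintro ⟨U', V', hU', hV', huv, hdisj⟩
    apply hT.2
    refine ⟨Subtype.val '' U', Subtype.val '' V', subact_image T hT.1.2 U' hU',
      subact_image T hT.1.2 V' hV', ?_, ?_⟩
    · rw [← Set.image_union, huv, Set.image_univ, Subtype.range_coe]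
    · rw [← Set.image_inter Subtype.val_injective, hdisj, Set.image_empty]

/-- An act whose universal set is an indecomposable subact has all elements connected. -/
lemma conn_total_of_indecomp_univ {A : Type v} [RAct S A]
    (hT : IndecompSubact S (Set.univ : Set A)) : ∀ a b : A, Conn S a b := by
  by_contra h
  push_neg at h
  obtain ⟨a, b, hab⟩ := h
  apply hT.2
  refine ⟨{x | Conn S a x}, {x | ¬ Conn S a x}, ⟨⟨a, Conn.rfl (S := S) a⟩, ?_⟩, ⟨⟨b, hab⟩, ?_⟩, ?_, ?_⟩
  · intro x hx s
    exact Conn.trans hx (conn_act x s)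
  · intro x hx s hxs
    exact hx (Conn.trans hxs (Conn.symm (conn_act x s)))
  · ext x
    simp [Classical.em]
  · ext x
    simp

lemma cancellable_of_actIso {A A' : Type u} [RAct S A] [RAct S A']
    (hiso : ActIso S A A') (h : Cancellable S A') : Cancellable S A := by
  intro B C _ _ _ _ hbc
  obtain ⟨e, he⟩ := hiso
  have congr1 : ∀ (D : Type u) [RAct S D], ActIso S (A ⊕ D) (A' ⊕ D) := by
    intro D _
    refine ⟨Equiv.sumCongr e (Equiv.refl D), ?_⟩
    rintro (a | d) s
    · show Sum.inl (e (RAct.act a s)) = RAct.act (Sum.inl (e a)) s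
      rw [he]; rfl
    · rfl
  exact h B C (((congr1 B).symm').trans' (hbc.trans' (congr1 C)))

lemma sumAssoc_actIso (A : Type u_1) (A' : Type u_2) (B : Type u_3)
    [RAct S A] [RAct S A'] [RAct S B] :
    ActIso S ((A ⊕ A') ⊕ B) (A ⊕ (A' ⊕ B)) := by
  refine ⟨Equiv.sumAssoc A A' B, ?_⟩
  rintro ((a | a') | b) s <;> rfl

lemma cancellable_sum {A A' : Type u} [RAct S A] [RAct S A'] [Nonempty A']
    (hA : Cancellable S A) (hA' : Cancellable S A') : Cancellable S (A ⊕ A') := by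
  intro B C _ _ _ _ h
  have h2 : ActIso S (A ⊕ (A' ⊕ B)) (A ⊕ (A' ⊕ C)) :=
    ((sumAssoc_actIso A A' B).symm').trans' (h.trans' (sumAssoc_actIso A A' C))
  haveI : Nonempty (A' ⊕ B) := ⟨Sum.inl (Classical.arbitrary A')⟩
  haveI : Nonempty (A' ⊕ C) := ⟨Sum.inl (Classical.arbitrary A')⟩
  exact hA' B C (hA (A' ⊕ B) (A' ⊕ C) h2)

/-- Decomposition of an act along a subact whose complement is also a subact. -/
lemma actIso_sum_compl {A : Type u} [RAct S A] (U : Set A)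
    (hU : ∀ a ∈ U, ∀ s : S, RAct.act a s ∈ U)
    (hUc : ∀ a ∈ Uᶜ, ∀ s : S, RAct.act a s ∈ Uᶜ) :
    letI := subAct (S := S) U hU
    letI := subAct (S := S) Uᶜ hUc
    ActIso S (↥U ⊕ ↥Uᶜ) A := by
  letI := subAct (S := S) U hU
  letI := subAct (S := S) Uᶜ hUc
  classical
  refine ⟨Equiv.sumCompl (· ∈ U), ?_⟩
  rintro (x | x) s <;> rfl

lemma aux_cancellable : ∀ (n : ℕ) (A : Type u) [RAct S A] [Nonempty A]
    (T : Fin n → Set A), (∀ i, IndecompSubact S (T i)) →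
    (∀ i j, i ≠ j → T i ∩ T j = ∅) → (⋃ i, T i) = Set.univ → Cancellable S A := by
  intro n
  induction n with
  | zero =>
    intro A _ _ T _ _ hcov
    exfalso
    obtain ⟨a⟩ := ‹Nonempty A›
    have : a ∈ ⋃ i, T i := hcov ▸ Set.mem_univ a
    obtain ⟨i, -⟩ := Set.mem_iUnion.mp this
    exact i.elim0
  | succ n ih =>
    intro A _ _ T hind hdis hcov
    by_cases hn : ∃ x, x ∉ T 0
    · -- split A = T 0 ⊕ (T 0)ᶜ
      obtain ⟨x0, hx0⟩ := hn
      have hUcl := (hind 0).1.2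
      have hmemc : ∀ i : Fin n, ∀ a ∈ T i.succ, a ∈ (T 0)ᶜ := by
        intro i a ha ha0
        have : a ∈ T i.succ ∩ T 0 := ⟨ha, ha0⟩
        rw [hdis i.succ 0 (Fin.succ_ne_zero i)] at this
        exact this
      have hVcl : ∀ a ∈ (T 0)ᶜ, ∀ s : S, RAct.act a s ∈ (T 0)ᶜ := by
        intro a ha s
        have : a ∈ ⋃ i, T i := hcov ▸ Set.mem_univ a
        obtain ⟨j, hj⟩ := Set.mem_iUnion.mp this
        have hj0 : j ≠ 0 := fun h => ha (h ▸ hj)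
        obtain ⟨i, rfl⟩ : ∃ i : Fin n, j = i.succ := by
          induction j using Fin.cases with
          | zero => exact absurd rfl hj0
          | succ i => exact ⟨i, rfl⟩
        exact hmemc i _ ((hind i.succ).1.2 a hj s)
      letI instU := subAct (S := S) (T 0) hUcl
      letI instV := subAct (S := S) (T 0)ᶜ hVcl
      haveI : Nonempty ↥(T 0) := ⟨⟨(hind 0).1.1.choose, (hind 0).1.1.choose_spec⟩⟩
      haveI : Nonempty ↥(T 0)ᶜ := ⟨⟨x0, hx0⟩⟩
      have hcanU : Cancellable S ↥(T 0) :=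
        indecomp_cancellable ↥(T 0)
          (conn_total_of_indecomp_univ (indecomp_univ_of_indecomp (T 0) (hind 0)))
      -- the complement is covered by the remaining pieces
      set T' : Fin n → Set ↥(T 0)ᶜ := fun i => Subtype.val ⁻¹' T i.succ with hT'
      have hsub : ∀ i : Fin n, T i.succ ⊆ (T 0)ᶜ := fun i a ha => hmemc i a ha
      have hind' : ∀ i, @IndecompSubact S _ ↥(T 0)ᶜ instV (T' i) := by
        intro i
        constructor
        · constructor
          · obtain ⟨a, ha⟩ := (hind i.succ).1.1
            exact ⟨⟨a, hsub i ha⟩, ha⟩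
          · intro x hx s
            exact (hind i.succ).1.2 x.1 hx s
        · rintro ⟨U', V', hU', hV', huv, hdisj⟩
          apply (hind i.succ).2
          refine ⟨Subtype.val '' U', Subtype.val '' V',
            subact_image _ hVcl U' hU', subact_image _ hVcl V' hV', ?_, ?_⟩
          · rw [← Set.image_union, huv, hT']
            rw [Set.image_preimage_eq_inter_range, Subtype.range_coe]
            exact Set.inter_eq_left.mpr (hsub i)
          · rw [← Set.image_inter Subtype.val_injective, hdisj, Set.image_empty]
      have hdis' : ∀ i j, i ≠ j → T' i ∩ T' j = ∅ := by
        intro i j hij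
        have : T i.succ ∩ T j.succ = ∅ :=
          hdis i.succ j.succ (fun h => hij (Fin.succ_injective n h))
        rw [hT']
        ext x
        simp only [Set.mem_inter_iff, Set.mem_preimage, Set.mem_empty_iff_false, iff_false]
        rintro ⟨h1, h2⟩
        have : (x : A) ∈ T i.succ ∩ T j.succ := ⟨h1, h2⟩
        simp_all
      have hcov' : (⋃ i, T' i) = Set.univ := by
        ext x
        simp only [Set.mem_iUnion, Set.mem_univ, iff_true, hT', Set.mem_preimage]
        have : (x : A) ∈ ⋃ i, T i := hcov ▸ Set.mem_univ _
        obtain ⟨j, hj⟩ := Set.mem_iUnion.mp this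
        have hj0 : j ≠ 0 := fun h => x.2 (h ▸ hj)
        obtain ⟨i, rfl⟩ : ∃ i : Fin n, j = i.succ := by
          induction j using Fin.cases with
          | zero => exact absurd rfl hj0
          | succ i => exact ⟨i, rfl⟩
        exact ⟨i, hj⟩
      have hcanV : Cancellable S ↥(T 0)ᶜ := ih ↥(T 0)ᶜ T' hind' hdis' hcov'
      exact cancellable_of_actIso ((actIso_sum_compl (T 0) hUcl hVcl).symm')
        (cancellable_sum hcanU hcanV)
    · -- T 0 = univ
      push_neg at hn
      have huniv : T 0 = Set.univ := Set.eq_univ_of_forall hn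
      exact indecomp_cancellable A (conn_total_of_indecomp_univ (huniv ▸ hind 0))

end Aux

/-- Every finitely decomposable `S`-act is cancellable. -/
theorem finitelyDecomposable_cancellable (S : Type u) [Monoid S] (A : Type u)
    [RAct S A] [Nonempty A] (hA : FinitelyDecomposable S A)
    (B C : Type u) [RAct S B] [RAct S C] [Nonempty B] [Nonempty C]
    (h : ActIso S (A ⊕ B) (A ⊕ C)) : ActIso S B C := by
  obtain ⟨n, T, h1, h2, h3⟩ := hA
  exact aux_cancellable n A T h1 h2 h3 B C h
end

section
/- Let S be a monoid and let A be an S-act whose unique decomposition into indecomposable subacts is A = ⨆_{i∈I} A_i. For i, j ∈ I define i ∼ j if and only if A_i ≅ A_j, and for i ∈ I let [i] = {j ∈ I : A_i ≅ A_j} be its equivalence class. Assume the set P = {Card [i] : i ∈ I} of cardinalities of equivalence classes is finite. Then A is cancellable if and only if the equivalence class [i] is finite for every i ∈ I. -/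
universe u v w

/-- The induced `S`-act structure on a subact. -/
def IsSubact.ract {S : Type u} [Monoid S] {A : Type v} [RAct S A] {T : Set A}
    (hT : IsSubact S T) : RAct S T where
  act a s := ⟨RAct.act a.1 s, hT.2 a.1 a.2 s⟩
  act_one a := Subtype.ext (RAct.act_one a.1)
  act_mul a s t := Subtype.ext (RAct.act_mul a.1 s t)

/-- Two subacts are isomorphic if they are isomorphic as `S`-acts with the
induced actions. -/
def SubactIso {S : Type u} [Monoid S] {A : Type v} {A' : Type w} [RAct S A] [RAct S A']
    {T : Set A} {U : Set A'} (hT : IsSubact S T) (hU : IsSubact S U) : Prop :=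
  @ActIso S _ T U hT.ract hU.ract

/-!
Every act is the coproduct of its connected components, and two acts are isomorphic as soon as
every isomorphism type `K` occurs equally often among their components; write `m_A(K)` for the
cardinal number of components of `A` isomorphic to `K`. The components of `A ⊔ B` are those of
`A` together with those of `B`, so an isomorphism `A ⊔ B ≅ A ⊔ C` gives
`m_A(K) + m_B(K) = m_A(K) + m_C(K)` for every `K`, and `m_A(K)` can be cancelled whenever it is
finite. If instead a component `K` occurs infinitely often in `A`, then `A ⊔ K ≅ A ⊔ K ⊔ K`
while `K ≇ K ⊔ K`, since `K` has one component and `K ⊔ K` has two. Finally, the indecomposable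
blocks `A_i` are exactly the components of `A`, so `m_A(A_i) = Card [i]`.
-/

open Cardinal

variable {S : Type u} [Monoid S]

variable (S) in
def IsEquivariant {X : Type v} {Y : Type w} [RAct S X] [RAct S Y] (f : X → Y) : Prop :=
  ∀ (x : X) (s : S), f (RAct.act x s) = RAct.act (f x) s

theorem IsEquivariant.symm {X : Type v} {Y : Type w} [RAct S X] [RAct S Y] {e : X ≃ Y}
    (he : IsEquivariant S e) : IsEquivariant S e.symm := fun y s =>
  e.injective (by rw [he, e.apply_symm_apply, e.apply_symm_apply])

namespace ActIso

variable {X : Type v} {Y : Type w} {Z : Type*} [RAct S X] [RAct S Y] [RAct S Z]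

variable (S) in
theorem refl (X : Type v) [RAct S X] : ActIso S X X :=
  ⟨Equiv.refl X, fun _ _ => rfl⟩

theorem symm (h : ActIso S X Y) : ActIso S Y X :=
  let ⟨e, he⟩ := h
  ⟨e.symm, IsEquivariant.symm he⟩

theorem trans (h₁ : ActIso S X Y) (h₂ : ActIso S Y Z) : ActIso S X Z :=
  let ⟨e, he⟩ := h₁
  let ⟨f, hf⟩ := h₂
  ⟨e.trans f, fun x s => by simp [he, hf]⟩

end ActIso

instance sigmaRAct {ι : Type v} (F : ι → Type w) [∀ i, RAct S (F i)] :
    RAct S (Σ i, F i) where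
  act x s := ⟨x.1, RAct.act x.2 s⟩
  act_one x := by simp [RAct.act_one]
  act_mul x s t := by simp [RAct.act_mul]

theorem ActIso.sigmaCongr {ι : Type v} {κ : Type v'} {F : ι → Type w} {G : κ → Type w'}
    [∀ i, RAct S (F i)] [∀ k, RAct S (G k)] (σ : ι ≃ κ)
    (h : ∀ i, ActIso S (F i) (G (σ i))) : ActIso S (Σ i, F i) (Σ k, G k) := by
  choose f hf using h
  refine ⟨Equiv.sigmaCongr σ f, fun ⟨i, x⟩ s => ?_⟩
  show (⟨σ i, f i (RAct.act x s)⟩ : Σ k, G k) = ⟨σ i, RAct.act (f i x) s⟩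
  rw [hf]

namespace RAct

variable (S) in
def Component (X : Type v) [RAct S X] : Type v :=
  Quot fun x y : X => ∃ s : S, y = RAct.act x s

section Components

variable {X : Type v} {Y : Type w} [RAct S X] [RAct S Y]

variable (S) in
def component (x : X) : Component S X :=
  Quot.mk _ x

theorem component_act (x : X) (s : S) : component S (act x s) = component S x :=
  (Quot.sound ⟨s, rfl⟩).symm

theorem Component.exists_rep (q : Component S X) : ∃ x, component S x = q :=
  Quot.exists_rep q

@[elab_as_elim]
theorem Component.ind {p : Component S X → Prop} (h : ∀ x, p (component S x))
    (q : Component S X) : p q :=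
  Quot.ind h q

def Component.lift {β : Sort*} (f : X → β) (hf : ∀ x (s : S), f (act x s) = f x) :
    Component S X → β :=
  Quot.lift f (by rintro x _ ⟨s, rfl⟩; exact (hf x s).symm)

@[simp]
theorem Component.lift_component {β : Sort*} (f : X → β) (hf : ∀ x (s : S), f (act x s) = f x)
    (x : X) : Component.lift f hf (component S x) = f x :=
  rfl

def Component.map (f : X → Y) (hf : IsEquivariant S f) : Component S X → Component S Y :=
  Component.lift (fun x => component S (f x)) fun x s => by rw [hf, component_act]

@[simp]
theorem Component.map_component (f : X → Y) (hf : IsEquivariant S f) (x : X) :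
    Component.map f hf (component S x) = component S (f x) :=
  rfl

def compSet (q : Component S X) : Set X :=
  {x | component S x = q}

theorem isSubact_compSet (q : Component S X) : IsSubact S (compSet q) :=
  ⟨q.exists_rep, fun x hx s => (component_act x s).trans hx⟩

instance (q : Component S X) : RAct S (compSet q) :=
  (isSubact_compSet q).ract

theorem actIso_sigma_compSet (X : Type v) [RAct S X] :
    ActIso S X (Σ q : Component S X, compSet q) :=
  ⟨(Equiv.sigmaFiberEquiv (component S)).symm, fun x s =>
    Sigma.subtype_ext (component_act x s) rfl⟩

theorem mem_iff_of_component_eq {U : Set X} (hU : ∀ x (s : S), act x s ∈ U ↔ x ∈ U)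
    {x y : X} (h : component S x = component S y) : x ∈ U ↔ y ∈ U :=
  Iff.of_eq (congrArg (Component.lift (· ∈ U) fun x s => propext (hU x s)) h)

instance (q : Component S X) : Subsingleton (Component S (compSet q)) := by
  classical
  -- `g` remembers the component inside `compSet q`; it is invariant on all of `X` because
  -- neither `compSet q` nor its complement can be left by acting.
  let g : X → Option (Component S (compSet q)) := fun x =>
    if hx : x ∈ compSet q then some (component S ⟨x, hx⟩) else none
  have hg : ∀ x (s : S), g (act x s) = g x := by
    intro x s
    by_cases hx : x ∈ compSet q
    · have hxs : act x s ∈ compSet q := (isSubact_compSet q).2 x hx s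
      simp only [g, dif_pos hx, dif_pos hxs]
      exact congrArg some (component_act (⟨x, hx⟩ : compSet q) s)
    · have hxs : act x s ∉ compSet q := fun h => hx ((component_act x s).symm.trans h)
      simp only [g, dif_neg hx, dif_neg hxs]
  refine ⟨Component.ind fun k => Component.ind fun k' => Option.some_injective _ ?_⟩
  have := congrArg (Component.lift g hg) (k.2.trans k'.2.symm)
  simpa [g, k.2, k'.2] using this

end Components

variable (S) in
def isoSetoid : Setoid (Σ X : Type v, RAct S X) where
  r X Y := @ActIso S _ X.1 Y.1 X.2 Y.2
  iseqv := ⟨fun ⟨X, _⟩ => ActIso.refl S X, @fun ⟨_, _⟩ ⟨_, _⟩ h => h.symm,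
    @fun ⟨_, _⟩ ⟨_, _⟩ ⟨_, _⟩ h₁ h₂ => h₁.trans h₂⟩

variable (S) in
def IsoClass : Type (max u (v + 1)) :=
  Quotient (isoSetoid.{u, v} S)

variable (S) in
def isoClass (X : Type v) [RAct S X] : IsoClass.{u, v} S :=
  Quotient.mk _ ⟨X, inferInstance⟩

theorem isoClass_eq_iff {X Y : Type v} [RAct S X] [RAct S Y] :
    isoClass S X = isoClass S Y ↔ ActIso S X Y :=
  Quotient.eq

end RAct

def IsSubact.isoClass {A : Type v} [RAct S A] {T : Set A} (hT : IsSubact S T) : RAct.IsoClass S :=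
  @RAct.isoClass S _ T hT.ract

theorem IsSubact.isoClass_eq_iff {A : Type v} [RAct S A] {T U : Set A} (hT : IsSubact S T)
    (hU : IsSubact S U) : hT.isoClass = hU.isoClass ↔ SubactIso hT hU :=
  @RAct.isoClass_eq_iff S _ T U hT.ract hU.ract

theorem IsSubact.isoClass_congr {A : Type v} [RAct S A] {T U : Set A} (h : T = U)
    (hT : IsSubact S T) (hU : IsSubact S U) : hT.isoClass = hU.isoClass := by
  subst h; rfl

namespace RAct

section Counting

variable {X : Type v} {Y : Type v} [RAct S X] [RAct S Y]

def componentClass (q : Component S X) : IsoClass S :=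
  (isSubact_compSet q).isoClass

variable (S) in
def componentCount (X : Type v) [RAct S X] (c : IsoClass.{u, v} S) : Cardinal.{v} :=
  Cardinal.mk {q : Component S X // componentClass q = c}

theorem componentClass_map {f : X → Y} (hf : IsEquivariant S f) (hinj : f.Injective)
    (hmap : (Component.map f hf).Injective)
    (hrange : ∀ y q, component S y = Component.map f hf q → y ∈ Set.range f)
    (q : Component S X) : componentClass (Component.map f hf q) = componentClass q := by
  refine isoClass_eq_iff.2 (ActIso.symm ⟨Equiv.ofBijective
    (fun x : compSet q => ⟨f x, (Component.map_component f hf x).symm.trans (congrArg _ x.2)⟩)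
    ⟨fun x y h => Subtype.ext (hinj (congrArg Subtype.val h)), ?_⟩,
    fun x s => Subtype.ext (hf x s)⟩)
  rintro ⟨y, hy⟩
  obtain ⟨x, rfl⟩ := hrange y q hy
  exact ⟨⟨x, hmap hy⟩, rfl⟩

def Component.congr (e : X ≃ Y) (he : IsEquivariant S e) : Component S X ≃ Component S Y where
  toFun := Component.map e he
  invFun := Component.map e.symm he.symm
  left_inv := Component.ind fun x => by simp
  right_inv := Component.ind fun y => by simp

theorem _root_.ActIso.componentCount_eq (h : ActIso S X Y) (c : IsoClass S) :
    componentCount S X c = componentCount S Y c := by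
  obtain ⟨e, he⟩ := h
  have hclass (q : Component S X) : componentClass (Component.congr e he q) = componentClass q :=
    componentClass_map he e.injective (Component.congr e he).injective
      (fun y _ _ => e.surjective y) q
  exact Cardinal.mk_congr (Equiv.subtypeEquiv (Component.congr e he) fun q => by rw [hclass])

def sumComponentEquiv : Component S (X ⊕ Y) ≃ Component S X ⊕ Component S Y where
  toFun := Component.lift (Sum.map (component S) (component S)) <| by
    rintro (x | y) s
    · exact congrArg Sum.inl (component_act x s)
    · exact congrArg Sum.inr (component_act y s)
  invFun := Sum.elim (Component.map Sum.inl fun _ _ => rfl) (Component.map Sum.inr fun _ _ => rfl)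
  left_inv := Component.ind <| by rintro (x | y) <;> rfl
  right_inv := by rintro (q | q) <;> induction q using Component.ind <;> rfl

theorem componentCount_sum (c : IsoClass S) :
    componentCount S (X ⊕ Y) c = componentCount S X c + componentCount S Y c := by
  let e : Component S (X ⊕ Y) ≃ Component S X ⊕ Component S Y := sumComponentEquiv
  have hinl (q : Component S X) : componentClass (e.symm (.inl q)) = componentClass q :=
    componentClass_map (fun _ _ => rfl) Sum.inl_injective
      (e.symm.injective.comp Sum.inl_injective) (by
        rintro (x | y) q' h
        · exact ⟨x, rfl⟩
        · exact (Sum.inr_ne_inl ((congrArg e h).trans (e.apply_symm_apply (.inl q')))).elim) q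
  have hinr (q : Component S Y) : componentClass (e.symm (.inr q)) = componentClass q :=
    componentClass_map (fun _ _ => rfl) Sum.inr_injective
      (e.symm.injective.comp Sum.inr_injective) (by
        rintro (x | y) q' h
        · exact (Sum.inl_ne_inr ((congrArg e h).trans (e.apply_symm_apply (.inr q')))).elim
        · exact ⟨y, rfl⟩) q
  calc componentCount S (X ⊕ Y) c
      = #({q // componentClass (e.symm (.inl q)) = c} ⊕
          {q // componentClass (e.symm (.inr q)) = c}) :=
        mk_congr ((e.subtypeEquiv (q := fun z => componentClass (e.symm z) = c) fun q => by
          rw [e.symm_apply_apply]).trans Equiv.subtypeSum)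
    _ = componentCount S X c + componentCount S Y c := by
        simp only [hinl, hinr, mk_sum, lift_id, componentCount]

theorem actIso_of_componentCount_eq (h : ∀ c, componentCount S X c = componentCount S Y c) :
    ActIso S X Y := by
  have e := fun c => (Cardinal.eq.1 (h c)).some
  let σ := Equiv.ofFiberEquiv e
  have hσ (q : Component S X) : ActIso S (compSet q) (compSet (σ q)) :=
    isoClass_eq_iff.1 (Equiv.ofFiberEquiv_map e q).symm
  exact (actIso_sigma_compSet X).trans
    ((ActIso.sigmaCongr σ hσ).trans (actIso_sigma_compSet Y).symm)

section Connected

variable [Subsingleton (Component S X)]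

theorem componentCount_le_one (c : IsoClass S) : componentCount S X c ≤ 1 :=
  le_one_iff_subsingleton.2 inferInstance

theorem componentClass_eq_isoClass (q : Component S X) : componentClass q = isoClass S X := by
  have hq : compSet q = Set.univ := Set.eq_univ_of_forall fun _ => Subsingleton.elim _ _
  refine isoClass_eq_iff.2 ⟨(Equiv.setCongr hq).trans (Equiv.Set.univ X), fun _ _ => rfl⟩

theorem componentCount_eq_zero_of_ne {c : IsoClass S} (hc : c ≠ isoClass S X) :
    componentCount S X c = 0 :=
  mk_eq_zero_iff.2 ⟨fun q => hc (q.2.symm.trans (componentClass_eq_isoClass q.1))⟩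

theorem not_actIso_sum_self [Nonempty X] : ¬ ActIso S X (X ⊕ X) := by
  rintro ⟨e, he⟩
  let f := (Component.congr e he).trans sumComponentEquiv
  obtain ⟨x⟩ := ‹Nonempty X›
  exact Sum.inl_ne_inr (f.symm.injective (Subsingleton.elim (f.symm (.inl (component S x)))
    (f.symm (.inr (component S x)))))

end Connected

end Counting

theorem cancellable_iff_componentCount_lt_aleph0 {A : Type u} [RAct S A] :
    Cancellable S A ↔ ∀ c, componentCount S A c < ℵ₀ := by
  refine ⟨fun hA c => ?_, fun h B C _ _ _ _ hBC => actIso_of_componentCount_eq fun c => ?_⟩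
  · by_contra! hc
    obtain ⟨⟨q, rfl⟩⟩ : Nonempty {q : Component S A // componentClass q = c} :=
      mk_ne_zero_iff.1 (aleph0_pos.trans_le hc).ne'
    have : Nonempty (compSet q) := (isSubact_compSet q).1.to_subtype
    refine not_actIso_sum_self (hA _ (compSet q ⊕ compSet q) (actIso_of_componentCount_eq
      fun d => ?_))
    rw [componentCount_sum, componentCount_sum, componentCount_sum]
    rcases eq_or_ne d (componentClass q) with rfl | hd
    · have h1 : componentCount S (compSet q) (componentClass q) < ℵ₀ :=
        (componentCount_le_one _).trans_lt one_lt_aleph0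
      rw [add_eq_left hc (h1.le.trans hc), add_eq_left hc ((add_lt_aleph0 h1 h1).le.trans hc)]
    · simp only [componentCount_eq_zero_of_ne hd, add_zero]
  · have hc := hBC.componentCount_eq c
    rw [componentCount_sum, componentCount_sum] at hc
    exact Cardinal.eq_of_add_eq_add_left hc (h c)

theorem _root_.IndecompSubact.component_eq {A : Type v} [RAct S A] {U : Set A}
    (hU : IndecompSubact S U) {a b : A} (ha : a ∈ U) (hb : b ∈ U) :
    component S a = component S b := by
  by_contra hne
  refine hU.2 ⟨U ∩ compSet (component S b), U \ compSet (component S b),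
    ⟨⟨b, hb, rfl⟩, fun x hx s => ⟨hU.1.2 x hx.1 s, (isSubact_compSet _).2 x hx.2 s⟩⟩,
    ⟨⟨a, ha, hne⟩, fun x hx s =>
      ⟨hU.1.2 x hx.1 s, fun h => hx.2 ((component_act x s).symm.trans h)⟩⟩,
    Set.inter_union_sdiff U _, Set.eq_empty_of_forall_notMem fun _ hx => hx.2.2 hx.1.2⟩

section Partition

variable {A : Type v} [RAct S A] {I : Type v} {T : I → Set A}

theorem block_eq_of_mem (hdisj : ∀ i j, i ≠ j → T i ∩ T j = ∅) {x : A} {i j : I}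
    (hi : x ∈ T i) (hj : x ∈ T j) : i = j := by
  by_contra h
  exact (hdisj i j h).subset ⟨hi, hj⟩

theorem exists_mem_block (hcover : (⋃ i, T i) = Set.univ) (x : A) : ∃ i, x ∈ T i :=
  Set.mem_iUnion.1 (hcover ▸ Set.mem_univ x)

theorem mem_iff_component_eq (hind : ∀ i, IndecompSubact S (T i))
    (hdisj : ∀ i j, i ≠ j → T i ∩ T j = ∅) (hcover : (⋃ i, T i) = Set.univ)
    {i : I} {a x : A} (ha : a ∈ T i) : x ∈ T i ↔ component S x = component S a := by
  have hsat : ∀ y (s : S), act y s ∈ T i ↔ y ∈ T i := fun y s => by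
    refine ⟨fun h => ?_, fun h => (hind i).1.2 y h s⟩
    obtain ⟨j, hj⟩ := exists_mem_block hcover y
    rwa [block_eq_of_mem hdisj h ((hind j).1.2 y hj s)]
  exact ⟨fun hx => (hind i).component_eq hx ha, fun h => (mem_iff_of_component_eq hsat h).2 ha⟩

theorem componentCount_eq_mk_blocks (hind : ∀ i, IndecompSubact S (T i))
    (hdisj : ∀ i j, i ≠ j → T i ∩ T j = ∅) (hcover : (⋃ i, T i) = Set.univ)
    (c : IsoClass S) :
    componentCount S A c = #{i | (hind i).1.isoClass = c} := by
  let e : I → Component S A := fun i => component S (hind i).1.1.some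
  have hmem (i : I) (x : A) : x ∈ T i ↔ component S x = e i :=
    mem_iff_component_eq hind hdisj hcover (hind i).1.1.some_mem
  have he : e.Bijective := by
    refine ⟨fun i j h => block_eq_of_mem hdisj (hind i).1.1.some_mem ((hmem j _).2 h), ?_⟩
    intro q
    obtain ⟨x, rfl⟩ := q.exists_rep
    obtain ⟨i, hi⟩ := exists_mem_block hcover x
    exact ⟨i, ((hmem i x).1 hi).symm⟩
  have hclass (i : I) : componentClass (e i) = (hind i).1.isoClass :=
    IsSubact.isoClass_congr (Set.ext fun x => (hmem i x).symm) _ _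
  exact mk_congr ((Equiv.ofBijective e he).subtypeEquiv fun i => by
    simp [hclass]).symm

end Partition

end RAct

open RAct in
theorem cancellable_iff_classes_finite_general (S : Type u) [Monoid S] (A : Type u)
    [RAct S A] (I : Type u) (T : I → Set A)
    (hind : ∀ i, IndecompSubact S (T i))
    (hdisj : ∀ i j, i ≠ j → T i ∩ T j = ∅)
    (hcover : (⋃ i, T i) = Set.univ) :
    Cancellable S A ↔ ∀ i : I, {j : I | SubactIso (hind i).1 (hind j).1}.Finite := by
  have hclass (i : I) : {j | SubactIso (hind i).1 (hind j).1} =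
      {j | (hind j).1.isoClass = (hind i).1.isoClass} :=
    Set.ext fun j => (eq_comm.trans ((hind i).1.isoClass_eq_iff (hind j).1)).symm
  simp only [cancellable_iff_componentCount_lt_aleph0,
    componentCount_eq_mk_blocks hind hdisj hcover, hclass, lt_aleph0_iff_set_finite]
  refine ⟨fun h i => h _, fun h c => ?_⟩
  by_cases hc : ∃ i, (hind i).1.isoClass = c
  · obtain ⟨i, rfl⟩ := hc
    exact h i
  · simp only [not_exists] at hc
    simp [hc]

/-- Let `A = ⨆_{i ∈ I} A_i` be the decomposition of `A` into
indecomposable subacts, and suppose the set `P = {Card [i] : i ∈ I}` of cardinalities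
of the isomorphism classes `[i] = {j : A_i ≅ A_j}` is finite. Then `A` is cancellable
iff every class `[i]` is finite. -/
theorem cancellable_iff_classes_finite (S : Type u) [Monoid S] (A : Type u)
    [RAct S A] [Nonempty A] (I : Type u) (T : I → Set A)
    (hind : ∀ i, IndecompSubact S (T i))
    (hdisj : ∀ i j, i ≠ j → T i ∩ T j = ∅)
    (hcover : (⋃ i, T i) = Set.univ)
    (hP : {c : Cardinal.{u} |
      ∃ i : I, c = Cardinal.mk {j : I | SubactIso (hind i).1 (hind j).1}}.Finite) :
    Cancellable S A ↔ ∀ i : I, {j : I | SubactIso (hind i).1 (hind j).1}.Finite :=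
  cancellable_iff_classes_finite_general S A I T hind hdisj hcover
end
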